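/- Let G be a finite simple graph, and for each nonnegative integer k let V_k denote the set of vertices of G of degree k. Then G is the unique labeled realization of its neighborhood degree list (i.e., every simple graph H on the same vertex set with NDL_H(v) = NDL_G(v) for all vertices v satisfies H = G) if and only if both of the following hold: (a) for every k, the induced subgraph G[V_k] is a threshold graph; (b) for every pair of distinct values k and ℓ, the bipartite graph G[V_k, V_ℓ] is a difference graph. -/

import Mathlib

/-- The degree of a vertex: the number of its neighbors. -/
noncomputable def deg {V : Type*} (G : SimpleGraph V) (v : V) : ℕ :=
  (G.neighborSet v).ncard

/-- The neighborhood degree list of a vertex `v`: the multiset of the degrees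
(in `G`) of the neighbors of `v`. -/
noncomputable def NDL {V : Type*} [Fintype V] (G : SimpleGraph V) (v : V) : Multiset ℕ :=
  ((G.neighborSet v).toFinite.toFinset).val.map (deg G)

/-- The subgraph of `G` consisting precisely of the edges of `G` joining `s` to `t`. -/
def crossGraph {V : Type*} (G : SimpleGraph V) (s t : Set V) : SimpleGraph V where
  Adj u w := G.Adj u w ∧ ((u ∈ s ∧ w ∈ t) ∨ (u ∈ t ∧ w ∈ s))
  symm := ⟨fun u w h => ⟨h.1.symm, by tauto⟩⟩
  loopless := ⟨fun v h => G.loopless.irrefl v h.1⟩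

/-- A graph is a threshold graph if there are a real threshold `t` and real vertex
weights such that two distinct vertices are adjacent iff the sum of their weights
is at least `t`. -/
def IsThreshold {V : Type*} (G : SimpleGraph V) : Prop :=
  ∃ (t : ℝ) (w : V → ℝ), ∀ u v : V, u ≠ v → (G.Adj u v ↔ t ≤ w u + w v)

/-- A graph is a difference graph if there are a real threshold `t` and real vertex
weights, each of absolute value at most `t`, such that two distinct vertices are
adjacent iff the absolute value of the difference of their weights is at least `t`. -/
def IsDifference {V : Type*} (H : SimpleGraph V) : Prop :=
  ∃ (t : ℝ) (w : V → ℝ), (∀ v, |w v| ≤ t) ∧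
    ∀ u v : V, u ≠ v → (H.Adj u v ↔ t ≤ |w u - w v|)

/-!
Call edges `ab`, `cd` together with non-edges `ad`, `cb` an alternating 4-cycle. When
`deg a = deg c` and `deg b = deg d`, the 2-switch `ab, cd ↦ ad, cb` changes no neighborhood degree
list, so a unique realization has no alternating 4-cycle with `a, c ∈ V_k` and `b, d ∈ V_ℓ`.

Without such cycles, the neighborhoods in `V_ℓ` of the vertices of `V_k` are nested, so ranking
them by size gives weights with `u ~ v ↔ g v ≤ f u` on `V_k × V_ℓ` (a biorder). The neighborhood
degree lists of a graph `H` determine, for every vertex, its number of neighbors in each `V_ℓ`,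
hence the sum of `f u - g v` over the `H`-edges between `V_k` and `V_ℓ`. That sum is termwise at
most the one for `G`, whose edges are exactly the pairs where `f u - g v ≥ 0`; equality forces
`H = G`.

Finally, on `V_k × V_k` a symmetric biorder is a threshold graph (weights `f - g`), and on disjoint
`V_k × V_ℓ` it is a difference graph; conversely, neither kind of graph contains an alternating
4-cycle.
-/

open Finset SimpleGraph
open scoped Classical

section

variable {V : Type*}

structure IsAlternatingCycle (G : SimpleGraph V) (a b c d : V) : Prop where
  adj_ab : G.Adj a b
  adj_cd : G.Adj c d
  not_adj_ad : ¬G.Adj a d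
  not_adj_cb : ¬G.Adj c b
  ne_ad : a ≠ d
  ne_cb : c ≠ b

def NoAlternatingCycle (G : SimpleGraph V) (U W : Set V) : Prop :=
  ∀ a ∈ U, ∀ b ∈ W, ∀ c ∈ U, ∀ d ∈ W, ¬IsAlternatingCycle G a b c d

namespace IsAlternatingCycle

variable {G : SimpleGraph V} {a b c d : V}

lemma ne_ac (h : IsAlternatingCycle G a b c d) : a ≠ c := by
  rintro rfl
  exact h.not_adj_cb h.adj_ab

lemma ne_bd (h : IsAlternatingCycle G a b c d) : b ≠ d := by
  rintro rfl
  exact h.not_adj_ad h.adj_ab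

end IsAlternatingCycle

section TwoSwitch

def twoSwitch (G : SimpleGraph V) (a b c d : V) : SimpleGraph V :=
  G.deleteEdges {s(a, b), s(c, d)} ⊔ (edge a d ⊔ edge c b)

noncomputable def twoSwitchPerm (a b c d v : V) : Equiv.Perm V :=
  if v = a ∨ v = c then Equiv.swap b d else if v = b ∨ v = d then Equiv.swap a c else 1

variable {G : SimpleGraph V} {a b c d : V}

lemma IsAlternatingCycle.twoSwitch_adj_iff (h : IsAlternatingCycle G a b c d) (v x : V) :
    (twoSwitch G a b c d).Adj v x ↔ G.Adj v (twoSwitchPerm a b c d v x) := by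
  have hac := h.ne_ac
  have hbd := h.ne_bd
  obtain ⟨hab, hcd, had, hcb, had', hcb'⟩ := h
  have hab' := G.ne_of_adj hab
  have hcd' := G.ne_of_adj hcd
  simp only [twoSwitch, twoSwitchPerm, sup_adj, deleteEdges_adj, edge_adj, Set.mem_insert_iff,
    Set.mem_singleton_iff, Sym2.eq_iff]
  split_ifs <;> simp only [Equiv.swap_apply_def, Equiv.Perm.one_apply] <;>
    grind [adj_comm]

lemma IsAlternatingCycle.twoSwitch_ne (h : IsAlternatingCycle G a b c d) :
    twoSwitch G a b c d ≠ G := fun hG =>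
  h.not_adj_ad (hG ▸ (h.twoSwitch_adj_iff a d).2 (by simpa [twoSwitchPerm] using h.adj_ab))

lemma deg_swap_apply {p q : V} (h : deg G p = deg G q) (x : V) :
    deg G (Equiv.swap p q x) = deg G x := by
  rcases eq_or_ne x p with rfl | hp
  · simp [h]
  rcases eq_or_ne x q with rfl | hq
  · simp [h]
  rw [Equiv.swap_apply_of_ne_of_ne hp hq]

lemma deg_twoSwitchPerm_apply (hac : deg G a = deg G c) (hbd : deg G b = deg G d) (v x : V) :
    deg G (twoSwitchPerm a b c d v x) = deg G x := by
  unfold twoSwitchPerm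
  split_ifs
  · exact deg_swap_apply hbd x
  · exact deg_swap_apply hac x
  · rfl

end TwoSwitch

section NDL

variable [Fintype V]

lemma card_ndl (G : SimpleGraph V) (v : V) : Multiset.card (NDL G v) = deg G v := by
  rw [NDL, Multiset.card_map, deg, Set.ncard_eq_toFinset_card _ (Set.toFinite _)]
  rfl

lemma count_ndl (G : SimpleGraph V) (v : V) (k : ℕ) :
    (NDL G v).count k = #{x | G.Adj v x ∧ deg G x = k} := by
  rw [NDL, Multiset.count_map, ← Finset.filter_val, Finset.card_val]
  congr 1
  ext x
  simp [eq_comm]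

lemma ndl_eq_of_adj_iff_perm {G H : SimpleGraph V} (τ : V → Equiv.Perm V)
    (hτ : ∀ v x, deg G (τ v x) = deg G x) (hadj : ∀ v x, H.Adj v x ↔ G.Adj v (τ v x)) (v : V) :
    NDL H v = NDL G v := by
  have hdeg (y : V) : deg H y = deg G y := by
    have : H.neighborSet y = τ y ⁻¹' G.neighborSet y := by ext x; exact hadj y x
    rw [deg, deg, this, Set.ncard_preimage_of_injective_subset_range (τ y).injective (by simp)]
  ext k
  rw [count_ndl, count_ndl]
  exact Finset.card_equiv (τ v) fun x => by simp [hadj, hdeg, hτ]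

lemma IsAlternatingCycle.ndl_twoSwitch {G : SimpleGraph V} {a b c d : V}
    (h : IsAlternatingCycle G a b c d) (hac : deg G a = deg G c) (hbd : deg G b = deg G d)
    (v : V) : NDL (twoSwitch G a b c d) v = NDL G v :=
  ndl_eq_of_adj_iff_perm _ (deg_twoSwitchPerm_apply hac hbd) h.twoSwitch_adj_iff v

end NDL

section Biorder

def BiorderOn (G : SimpleGraph V) (U W : Set V) : Prop :=
  ∃ f g : V → ℝ, ∀ u ∈ U, ∀ v ∈ W, u ≠ v → (G.Adj u v ↔ g v ≤ f u)

variable {G : SimpleGraph V}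

lemma exists_isAlternatingCycle_of_card_le {U W : Finset V} (hUW : U = W ∨ Disjoint U W)
    {a b c : V} (ha : a ∈ U) (hc : c ∈ U) (hb : b ∈ W) (hab : G.Adj a b) (hcb : ¬G.Adj c b)
    (hcb' : c ≠ b) (hle : #{w ∈ W | G.Adj a w} ≤ #{w ∈ W | G.Adj c w}) :
    ∃ d ∈ W, IsAlternatingCycle G a b c d := by
  set P := {w ∈ W | G.Adj a w}
  set Q := {w ∈ W | G.Adj c w}
  -- `hUW` is exactly what makes `a` and `c` count each other in `P`, `Q` both or neither
  have hsymm : c ∈ P ↔ a ∈ Q := by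
    rcases hUW with rfl | hdisj
    · simp [P, Q, ha, hc, G.adj_comm]
    · simp [P, Q, disjoint_left.1 hdisj ha, disjoint_left.1 hdisj hc]
  have hle' : #(P.erase c) ≤ #(Q.erase a) := by
    by_cases hcP : c ∈ P
    · rw [card_erase_of_mem hcP, card_erase_of_mem (hsymm.1 hcP)]
      omega
    · rwa [erase_eq_of_notMem hcP, erase_eq_of_notMem (mt hsymm.2 hcP)]
  have hbP : b ∈ P.erase c := by simp [P, hb, hab, hcb'.symm]
  have hlt : #((P.erase c).erase b) < #(Q.erase a) := by
    have := card_pos.2 ⟨b, hbP⟩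
    rw [card_erase_of_mem hbP]
    omega
  obtain ⟨d, hdQ, hdP⟩ := exists_mem_notMem_of_card_lt_card hlt
  simp only [Q, P, mem_erase, mem_filter] at hdQ hdP
  refine ⟨d, hdQ.2.1, hab, hdQ.2.2, fun had => ?_, hcb, hdQ.1.symm, hcb'⟩
  exact hdP ⟨fun hdb => hcb (hdb ▸ hdQ.2.2), (G.ne_of_adj hdQ.2.2).symm, hdQ.2.1, had⟩

lemma biorderOn_of_noAlternatingCycle {U W : Finset V} (hUW : U = W ∨ Disjoint U W)
    (h : NoAlternatingCycle G U W) : BiorderOn G U W := by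
  set r : V → ℕ := fun a => #{w ∈ W | G.Adj a w}
  have hrank : ∀ a ∈ U, ∀ c ∈ U, ∀ b ∈ W, G.Adj a b → ¬G.Adj c b → c ≠ b → r c < r a := by
    intro a ha c hc b hb hab hcb hcb'
    by_contra! hle
    obtain ⟨d, hd, hcyc⟩ := exists_isAlternatingCycle_of_card_le hUW ha hc hb hab hcb hcb' hle
    exact h a ha b hb c hc d hd hcyc
  refine ⟨fun a => r a, fun b => ({a ∈ U | a ≠ b ∧ ¬G.Adj a b}.sup r + 1 : ℕ), ?_⟩
  intro a ha b hb hab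
  rw [mem_coe] at ha hb
  rw [Nat.cast_le, Nat.add_one_le_iff]
  constructor
  · intro hadj
    have hpos : 0 < r a := card_pos.2 ⟨b, by simp [hb, hadj]⟩
    refine (Finset.sup_lt_iff hpos).2 fun c hc => ?_
    simp only [mem_filter] at hc
    exact hrank a ha c hc.1 b hb hadj hc.2.2 hc.2.1
  · intro hlt
    by_contra hadj
    have := le_sup (f := r) (mem_filter.2 ⟨ha, hab, hadj⟩ : a ∈ {a ∈ U | a ≠ b ∧ ¬G.Adj a b})
    omega

lemma sum_sum_ite_adj (X : SimpleGraph V) (U W : Finset V) (f g : V → ℝ) :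
    ∑ u ∈ U, ∑ v ∈ W, (if X.Adj u v then f u - g v else 0) =
      ∑ u ∈ U, #{v ∈ W | X.Adj u v} * f u - ∑ v ∈ W, #{u ∈ U | X.Adj u v} * g v := by
  have hsplit (u v : V) : (if X.Adj u v then f u - g v else 0) =
      (if X.Adj u v then f u else 0) - (if X.Adj u v then g v else 0) := by
    split_ifs <;> simp
  simp only [hsplit, sum_sub_distrib]
  rw [sum_comm (f := fun u v => if X.Adj u v then g v else 0)]
  simp only [← sum_filter, sum_const, nsmul_eq_mul]

lemma BiorderOn.adj_iff_of_card_eq {H : SimpleGraph V} {U W : Finset V}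
    (hG : BiorderOn G U W)
    (hrow : ∀ u ∈ U, #{v ∈ W | H.Adj u v} = #{v ∈ W | G.Adj u v})
    (hcol : ∀ v ∈ W, #{u ∈ U | H.Adj u v} = #{u ∈ U | G.Adj u v})
    {u v : V} (hu : u ∈ U) (hv : v ∈ W) : H.Adj u v ↔ G.Adj u v := by
  obtain ⟨f, g, hfg⟩ := hG
  -- `G` takes exactly the pairs with `f u - g v ≥ 0`, so `H` can only do worse termwise
  set D : V → V → ℝ := fun u v =>
    (if G.Adj u v then f u - g v else 0) - (if H.Adj u v then f u - g v else 0)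
  have hD_nonneg : ∀ u ∈ U, ∀ v ∈ W, 0 ≤ D u v := by
    intro u hu v hv
    rcases eq_or_ne u v with rfl | huv
    · simp [D]
    have := hfg u hu v hv huv
    by_cases hGuv : G.Adj u v <;> by_cases hHuv : H.Adj u v <;> simp [D, hGuv, hHuv] at this ⊢ <;>
      linarith
  have hD_sum : ∑ u ∈ U, ∑ v ∈ W, D u v = 0 := by
    have hrow' : ∑ u ∈ U, (#{v ∈ W | H.Adj u v} : ℝ) * f u =
        ∑ u ∈ U, (#{v ∈ W | G.Adj u v} : ℝ) * f u :=
      sum_congr rfl fun u hu => by rw [hrow u hu]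
    have hcol' : ∑ v ∈ W, (#{u ∈ U | H.Adj u v} : ℝ) * g v =
        ∑ v ∈ W, (#{u ∈ U | G.Adj u v} : ℝ) * g v :=
      sum_congr rfl fun v hv => by rw [hcol v hv]
    simp only [D, sum_sub_distrib, sum_sum_ite_adj, hrow', hcol', sub_self]
  have hD_zero : ∀ v ∈ W, D u v = 0 :=
    (sum_eq_zero_iff_of_nonneg (hD_nonneg u hu)).1
      ((sum_eq_zero_iff_of_nonneg fun u hu => sum_nonneg (hD_nonneg u hu)).1 hD_sum u hu)
  have hHG : {v ∈ W | H.Adj u v} ⊆ {v ∈ W | G.Adj u v} := by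
    intro v hv
    simp only [mem_filter] at hv ⊢
    refine ⟨hv.1, by_contra fun hGuv => ?_⟩
    have hzero := hD_zero v hv.1
    have hneg := not_le.1 ((hfg u hu v hv.1 (H.ne_of_adj hv.2)).not.1 hGuv)
    simp only [D, if_neg hGuv, if_pos hv.2] at hzero
    linarith
  have heq := eq_of_subset_of_card_le hHG (hrow u hu).ge
  simpa [hv] using Finset.ext_iff.1 heq v

lemma IsThreshold.noAlternatingCycle {S : Set V} (h : IsThreshold (G.induce S)) :
    NoAlternatingCycle G S S := by
  obtain ⟨t, w, hw⟩ := h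
  have key : ∀ x (hx : x ∈ S) y (hy : y ∈ S), x ≠ y →
      (G.Adj x y ↔ t ≤ w ⟨x, hx⟩ + w ⟨y, hy⟩) := fun x hx y hy hxy =>
    hw ⟨x, hx⟩ ⟨y, hy⟩ (by simpa using hxy)
  intro a ha b hb c hc d hd hcyc
  have hab := (key a ha b hb (G.ne_of_adj hcyc.adj_ab)).1 hcyc.adj_ab
  have hcd := (key c hc d hd (G.ne_of_adj hcyc.adj_cd)).1 hcyc.adj_cd
  have had := (key a ha d hd hcyc.ne_ad).not.1 hcyc.not_adj_ad
  have hcb := (key c hc b hb hcyc.ne_cb).not.1 hcyc.not_adj_cb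
  linarith [not_le.1 had, not_le.1 hcb]

lemma BiorderOn.isThreshold_induce {S : Set V} (h : BiorderOn G S S) :
    IsThreshold (G.induce S) := by
  obtain ⟨f, g, hfg⟩ := h
  refine ⟨0, fun x => f x - g x, fun x y hxy => ?_⟩
  have hxy' : (x : V) ≠ y := Subtype.coe_ne_coe.2 hxy
  have hxy_iff := hfg x x.2 y y.2 hxy'
  have hyx_iff := hfg y y.2 x x.2 hxy'.symm
  rw [G.adj_comm] at hyx_iff
  rw [induce_adj]
  constructor
  · intro hadj
    linarith [hxy_iff.1 hadj, hyx_iff.1 hadj]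
  · intro hsum
    by_contra hadj
    linarith [not_le.1 (hxy_iff.not.1 hadj), not_le.1 (hyx_iff.not.1 hadj)]

lemma crossGraph_adj {s t : Set V} {u w : V} :
    (crossGraph G s t).Adj u w ↔ G.Adj u w ∧ ((u ∈ s ∧ w ∈ t) ∨ (u ∈ t ∧ w ∈ s)) :=
  Iff.rfl

lemma IsDifference.noAlternatingCycle {A B : Set V} (hAB : Disjoint A B)
    (h : IsDifference ((crossGraph G A B).induce (A ∪ B))) : NoAlternatingCycle G A B := by
  obtain ⟨t, w, -, hw⟩ := h
  have key : ∀ x (hx : x ∈ A ∪ B) y (hy : y ∈ A ∪ B), x ≠ y →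
      ((crossGraph G A B).Adj x y ↔ t ≤ |w ⟨x, hx⟩ - w ⟨y, hy⟩|) := fun x hx y hy hxy =>
    hw ⟨x, hx⟩ ⟨y, hy⟩ (by simpa using hxy)
  have hA : ∀ x ∈ A, x ∉ B := fun x hx => Set.disjoint_left.1 hAB hx
  have hB : ∀ x ∈ B, x ∉ A := fun x hx => Set.disjoint_right.1 hAB hx
  intro a ha b hb c hc d hd hcyc
  have hab := (key a (.inl ha) b (.inr hb) (G.ne_of_adj hcyc.adj_ab)).1
    (crossGraph_adj.2 ⟨hcyc.adj_ab, .inl ⟨ha, hb⟩⟩)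
  have hcd := (key c (.inl hc) d (.inr hd) (G.ne_of_adj hcyc.adj_cd)).1
    (crossGraph_adj.2 ⟨hcyc.adj_cd, .inl ⟨hc, hd⟩⟩)
  have had := (key a (.inl ha) d (.inr hd) hcyc.ne_ad).not.1 fun h => hcyc.not_adj_ad h.1
  have hcb := (key c (.inl hc) b (.inr hb) hcyc.ne_cb).not.1 fun h => hcyc.not_adj_cb h.1
  have hac := (key a (.inl ha) c (.inl hc) hcyc.ne_ac).not.1 fun h => by
    simp [crossGraph_adj, hA a ha, hA c hc] at h
  have hbd := (key b (.inr hb) d (.inr hd) hcyc.ne_bd).not.1 fun h => by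
    simp [crossGraph_adj, hB b hb, hB d hd] at h
  rw [not_le, abs_sub_lt_iff] at had hcb hac hbd
  rcases le_abs'.1 hab with hab | hab <;> rcases le_abs'.1 hcd with hcd | hcd <;> linarith

lemma BiorderOn.isDifference {A B : Set V} (hAB : Disjoint A B) (h : BiorderOn G A B) :
    IsDifference ((crossGraph G A B).induce (A ∪ B)) := by
  obtain ⟨f, g, hfg⟩ := h
  have hA : ∀ x ∈ A, x ∉ B := fun x hx => Set.disjoint_left.1 hAB hx
  have hB : ∀ x ∈ B, x ∉ A := fun x hx => Set.disjoint_right.1 hAB hx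
  set φ : ℝ → ℝ := fun x => Real.arctan x / (2 * Real.pi)
  have hφ_mono : StrictMono φ := Real.arctan_strictMono.div_const (by positivity)
  have hφ_bound (x : ℝ) : |φ x| < 1 / 4 := by
    rw [abs_div, abs_of_pos (by positivity : 0 < 2 * Real.pi), div_lt_iff₀ (by positivity), abs_lt]
    constructor <;> linarith [Real.arctan_lt_pi_div_two x, Real.neg_pi_div_two_lt_arctan x]
  -- with `φ` squeezing into `(-1/4, 1/4)`, the shift by `± 1/2` turns `g b ≤ f a` into
  -- `1 ≤ |w a - w b|` and keeps each side within distance `1/2`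
  set w : V → ℝ := fun x => if x ∈ A then φ (f x) + 1 / 2 else φ (g x) - 1 / 2
  have hw_bound (x : V) : |w x| ≤ 1 := by
    have := abs_lt.1 (hφ_bound (f x))
    have := abs_lt.1 (hφ_bound (g x))
    simp only [w]
    split_ifs <;> rw [abs_le] <;> constructor <;> linarith
  have hcross : ∀ a ∈ A, ∀ b ∈ B, (G.Adj a b ↔ 1 ≤ |w a - w b|) := by
    intro a ha b hb
    have := abs_lt.1 (hφ_bound (f a))
    have := abs_lt.1 (hφ_bound (g b))
    simp only [w, if_pos ha, if_neg (hB b hb)]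
    rw [abs_of_pos (by linarith), hfg a ha b hb (fun hab => hA a ha (hab ▸ hb)),
      ← hφ_mono.le_iff_le]
    constructor <;> intro <;> linarith
  have hsame : ∀ x y, (x ∈ A ∧ y ∈ A) ∨ (x ∉ A ∧ y ∉ A) → |w x - w y| < 1 := by
    intro x y hxy
    have := abs_lt.1 (hφ_bound (f x))
    have := abs_lt.1 (hφ_bound (g x))
    have := abs_lt.1 (hφ_bound (f y))
    have := abs_lt.1 (hφ_bound (g y))
    rcases hxy with ⟨hx, hy⟩ | ⟨hx, hy⟩ <;> simp only [w, hx, hy, if_true, if_false] <;>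
      rw [abs_lt] <;> constructor <;> linarith
  refine ⟨1, fun x => w x, fun x => hw_bound x, ?_⟩
  rintro ⟨x, hx⟩ ⟨y, hy⟩ hxy
  simp only [induce_adj, crossGraph_adj]
  rcases hx with hxA | hxB <;> rcases hy with hyA | hyB
  · exact iff_of_false (by simp [hA x hxA, hA y hyA]) (not_le.2 (hsame x y (.inl ⟨hxA, hyA⟩)))
  · rw [← hcross x hxA y hyB]
    simp [hxA, hyB]
  · rw [abs_sub_comm, ← hcross y hyA x hxB, G.adj_comm]
    simp [hxB, hyA]
  · exact iff_of_false (by simp [hB x hxB, hB y hyB])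
      (not_le.2 (hsame x y (.inr ⟨hB x hxB, hB y hyB⟩)))

end Biorder

section DegreeClasses

variable [Fintype V] {G : SimpleGraph V}

noncomputable def degClass (G : SimpleGraph V) (k : ℕ) : Finset V := {v | deg G v = k}

@[simp]
lemma mem_degClass {v : V} {k : ℕ} : v ∈ degClass G k ↔ deg G v = k := by
  simp [degClass]

@[simp]
lemma coe_degClass (k : ℕ) : (degClass G k : Set V) = {v | deg G v = k} := by
  ext
  simp

lemma biorderOn_degClass (k l : ℕ)
    (h : NoAlternatingCycle G {v | deg G v = k} {v | deg G v = l}) :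
    BiorderOn G {v | deg G v = k} {v | deg G v = l} := by
  have hUW : degClass G k = degClass G l ∨ Disjoint (degClass G k) (degClass G l) := by
    rcases eq_or_ne k l with rfl | hkl
    · exact .inl rfl
    · refine .inr (disjoint_left.2 fun v hk hl => hkl ?_)
      rw [← mem_degClass.1 hk, ← mem_degClass.1 hl]
  rw [← coe_degClass, ← coe_degClass] at h ⊢
  exact biorderOn_of_noAlternatingCycle hUW h

lemma noAlternatingCycle_of_ndl_unique
    (huniq : ∀ H : SimpleGraph V, (∀ v, NDL H v = NDL G v) → H = G) (k l : ℕ) :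
    NoAlternatingCycle G {v | deg G v = k} {v | deg G v = l} := by
  rintro a ha b hb c hc d hd hcyc
  exact hcyc.twoSwitch_ne (huniq _ (hcyc.ndl_twoSwitch (ha.trans hc.symm) (hb.trans hd.symm)))

lemma count_ndl_eq_card_filter {H : SimpleGraph V} (hdeg : ∀ v, deg H v = deg G v) (u : V)
    (l : ℕ) : (NDL H u).count l = #{w ∈ degClass G l | H.Adj u w} := by
  rw [count_ndl, degClass, filter_filter]
  simp [hdeg, and_comm]

lemma eq_of_ndl_eq (h : ∀ k l, NoAlternatingCycle G {v | deg G v = k} {v | deg G v = l})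
    {H : SimpleGraph V} (hH : ∀ v, NDL H v = NDL G v) : H = G := by
  have hdeg (v : V) : deg H v = deg G v := by rw [← card_ndl, hH, card_ndl]
  have hrow (u : V) (l : ℕ) :
      #{w ∈ degClass G l | H.Adj u w} = #{w ∈ degClass G l | G.Adj u w} := by
    rw [← count_ndl_eq_card_filter hdeg, ← count_ndl_eq_card_filter (fun _ => rfl), hH]
  ext u v
  have hbiorder := biorderOn_degClass _ _ (h (deg G u) (deg G v))
  rw [← coe_degClass, ← coe_degClass] at hbiorder
  exact hbiorder.adj_iff_of_card_eq (fun u _ => hrow u _)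
    (fun v _ => by simpa only [H.adj_comm _ v, G.adj_comm _ v] using hrow v _)
    (mem_degClass.2 rfl) (mem_degClass.2 rfl)

lemma ndl_unique_iff :
    (∀ H : SimpleGraph V, (∀ v, NDL H v = NDL G v) → H = G) ↔
      ∀ k l, NoAlternatingCycle G {v | deg G v = k} {v | deg G v = l} :=
  ⟨noAlternatingCycle_of_ndl_unique, fun h _ => eq_of_ndl_eq h⟩

end DegreeClasses

end

/-- A finite simple graph `G` is the unique labeled realization of its neighborhood
degree list iff (a) for every `k` the induced subgraph `G[V_k]` is a threshold
graph, and (b) for all distinct `k, ℓ` the bipartite graph `G[V_k, V_ℓ]` is a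
difference graph. -/
theorem stmt16 {V : Type*} [Fintype V] (G : SimpleGraph V) :
    (∀ H : SimpleGraph V, (∀ v, NDL H v = NDL G v) → H = G) ↔
      ((∀ k : ℕ, IsThreshold (G.induce {v : V | deg G v = k})) ∧
       (∀ k ℓ : ℕ, k ≠ ℓ →
          IsDifference ((crossGraph G {v : V | deg G v = k} {v : V | deg G v = ℓ}).induce
            ({v : V | deg G v = k} ∪ {v : V | deg G v = ℓ})))) := by
  have hdisj {k l : ℕ} (hkl : k ≠ l) : Disjoint {v : V | deg G v = k} {v | deg G v = l} :=
    Set.disjoint_left.2 fun v hk hl => hkl (hk.symm.trans hl)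
  rw [ndl_unique_iff]
  constructor
  · intro h
    exact ⟨fun k => (biorderOn_degClass k k (h k k)).isThreshold_induce,
      fun k l hkl => (biorderOn_degClass k l (h k l)).isDifference (hdisj hkl)⟩
  · rintro ⟨hT, hD⟩ k l
    rcases eq_or_ne k l with rfl | hkl
    · exact (hT k).noAlternatingCycle
    · exact (hD k l hkl).noAlternatingCycle (hdisj hkl)
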